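/- Let A be a Schur ring over the infinite dihedral group D∞, let i and j be distinct nonzero integers, suppose {z^i, z^{−i}} and {z^j, z^{−j}} are basic sets of A, and let D be a basic set of A containing s, z^i s and z^j s. Then j ≠ 2i and i ≠ 2j. -/

import Mathlib

open scoped BigOperators

/-- A Schur ring over the group `G` with coefficients in the field `F`, presented by its
partition into finite nonempty basic sets. -/
structure SchurRing (F : Type) [Field F] [CharZero F] (G : Type) [Group G] [DecidableEq G] where
  /-- the basic sets -/
  parts : Set (Finset G)
  nonempty : ∀ C ∈ parts, C.Nonempty
  cover : ∀ g : G, ∃ C ∈ parts, g ∈ C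
  eq_or_disjoint : ∀ C ∈ parts, ∀ D ∈ parts, C = D ∨ Disjoint C D
  one_mem : ({1} : Finset G) ∈ parts
  inv_mem : ∀ C ∈ parts, C.image (·⁻¹) ∈ parts
  mul_mem : ∀ C ∈ parts, ∀ D ∈ parts, ∃ S : Finset (Finset G),
    (↑S : Set (Finset G)) ⊆ parts ∧ ∃ coef : Finset G → F,
      (∑ g ∈ C, MonoidAlgebra.single g (1 : F)) * (∑ g ∈ D, MonoidAlgebra.single g (1 : F))
        = ∑ E ∈ S, coef E • ∑ g ∈ E, MonoidAlgebra.single g (1 : F)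

/-- A subset of `G` is an `A`-set if it is a union of basic sets of `A`. -/
def SchurRing.IsASet {F : Type} [Field F] [CharZero F] {G : Type} [Group G] [DecidableEq G]
    (A : SchurRing F G) (X : Set G) : Prop :=
  ∃ 𝒮 : Set (Finset G), 𝒮 ⊆ A.parts ∧ X = ⋃ C ∈ 𝒮, (C : Set G)

/-- The infinite dihedral group, realized as `DihedralGroup 0`. -/
abbrev Dinf : Type := DihedralGroup 0

/-- The generator `z` of infinite order. -/
def zz : Dinf := DihedralGroup.r 1

/-- The reflection `s` of order two. -/
def ss : Dinf := DihedralGroup.sr 0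

/-!
The coefficient of `C̄ · D̄` at `x` counts the `c ∈ C` with `c⁻¹ x ∈ D`; since `C̄ · D̄` is a
combination of simple quantities of pairwise disjoint basic sets, this count is the same for all
`x` in the basic set `D`. If `j = 2i`, then at `x = zⁱ s ∈ D` both `c = z^{±i}` qualify (giving
`z²ⁱ s` and `s`), hence they qualify at every `x ∈ D`. So the finite set `D` is closed under left
multiplication by `z⁻ⁱ`, which is impossible since `zⁱ` has infinite order.
-/

open scoped Finset

noncomputable def simpleQuantity (F : Type*) [Semiring F] {G : Type*} (C : Finset G) :
    MonoidAlgebra F G :=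
  ∑ g ∈ C, MonoidAlgebra.single g 1

section simpleQuantity

variable {F G : Type*} [Semiring F] [DecidableEq G]

lemma coeff_simpleQuantity (C : Finset G) (x : G) :
    (simpleQuantity F C).coeff x = if x ∈ C then 1 else 0 := by
  simp [simpleQuantity, MonoidAlgebra.coeff_sum, Finset.sum_apply', Finsupp.single_apply]

lemma coeff_simpleQuantity_mul_simpleQuantity [Group G] (C D : Finset G) (x : G) :
    (simpleQuantity F C * simpleQuantity F D).coeff x = #{c ∈ C | c⁻¹ * x ∈ D} := by
  rw [simpleQuantity, Finset.sum_mul, MonoidAlgebra.coeff_sum, Finset.sum_apply']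
  simp only [MonoidAlgebra.coeff_single_mul_apply, one_mul, coeff_simpleQuantity,
    Finset.sum_boole]

end simpleQuantity

lemma Finset.isOfFinOrder_of_forall_mul_mem {G : Type*} [Group G] {s : Finset G} {a x : G}
    (hx : x ∈ s) (hs : ∀ y ∈ s, a * y ∈ s) : IsOfFinOrder a := by
  by_contra h
  have hpow : ∀ n : ℕ, a ^ n * x ∈ s := fun n => by
    induction n with
    | zero => simpa using hx
    | succ n ih => simpa only [pow_succ', mul_assoc] using hs _ ih
  have hinj : Function.Injective fun n : ℕ => a ^ n * x :=
    fun m n hmn => injective_pow_iff_not_isOfFinOrder.mpr h (mul_right_cancel hmn)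
  exact Set.infinite_of_injective_forall_mem hinj hpow s.finite_toSet

namespace SchurRing

variable {F : Type} [Field F] [CharZero F] {G : Type} [Group G] [DecidableEq G]
  (A : SchurRing F G)

lemma mem_iff_eq_of_mem {C E : Finset G} (hC : C ∈ A.parts) (hE : E ∈ A.parts) {x : G}
    (hx : x ∈ E) : x ∈ C ↔ C = E := by
  refine ⟨fun hxC => ?_, fun h => h ▸ hx⟩
  exact (A.eq_or_disjoint C hC E hE).resolve_right
    fun hdisj => Finset.disjoint_left.mp hdisj hxC hx

lemma coeff_simpleQuantity_mul_eq_of_mem {C D E : Finset G} (hC : C ∈ A.parts)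
    (hD : D ∈ A.parts) (hE : E ∈ A.parts) {x y : G} (hx : x ∈ E) (hy : y ∈ E) :
    (simpleQuantity F C * simpleQuantity F D).coeff x
      = (simpleQuantity F C * simpleQuantity F D).coeff y := by
  obtain ⟨S, hS, coef, hmul⟩ := A.mul_mem C hC D hD
  change simpleQuantity F C * simpleQuantity F D = ∑ E' ∈ S, coef E' • simpleQuantity F E'
    at hmul
  have hcoeff : ∀ w ∈ E, (simpleQuantity F C * simpleQuantity F D).coeff w
      = ∑ E' ∈ S, coef E' * if E' = E then 1 else 0 := fun w hw => by
    rw [hmul, MonoidAlgebra.coeff_sum, Finset.sum_apply']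
    refine Finset.sum_congr rfl fun E' hE' => ?_
    simp only [MonoidAlgebra.coeff_smul_apply, coeff_simpleQuantity,
      A.mem_iff_eq_of_mem (hS hE') hE hw, smul_eq_mul]
  rw [hcoeff x hx, hcoeff y hy]

lemma forall_inv_mul_mem {C D : Finset G} (hC : C ∈ A.parts) (hD : D ∈ A.parts) {g : G}
    (hg : g ∈ D) (hgC : ∀ c ∈ C, c⁻¹ * g ∈ D) : ∀ x ∈ D, ∀ c ∈ C, c⁻¹ * x ∈ D := by
  intro x hx
  have hcard := A.coeff_simpleQuantity_mul_eq_of_mem hC hD hD hx hg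
  rw [coeff_simpleQuantity_mul_simpleQuantity, coeff_simpleQuantity_mul_simpleQuantity,
    Finset.filter_true_of_mem hgC, Nat.cast_inj] at hcard
  exact Finset.card_filter_eq_iff.mp hcard

lemma isOfFinOrder_of_mul_mem_of_inv_mul_mem {c g : G} {D : Finset G}
    (hC : ({c, c⁻¹} : Finset G) ∈ A.parts) (hD : D ∈ A.parts) (hg : g ∈ D)
    (hcg : c * g ∈ D) (hcg' : c⁻¹ * g ∈ D) : IsOfFinOrder c := by
  have hclosed := A.forall_inv_mul_mem hC hD hg (by simp [hcg, hcg'])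
  exact (Finset.isOfFinOrder_of_forall_mul_mem hg
    fun x hx => hclosed x hx c (Finset.mem_insert_self _ _)).of_inv

end SchurRing

lemma not_isOfFinOrder_zz_zpow {n : ℤ} (hn : n ≠ 0) : ¬IsOfFinOrder (zz ^ n) := by
  intro h
  obtain ⟨m, hm, hpow⟩ := h.exists_pow_eq_one
  have hinj : Function.Injective fun k : ℤ => zz ^ k :=
    injective_zpow_iff_not_isOfFinOrder.mpr (orderOf_eq_zero_iff.mp DihedralGroup.orderOf_r_one)
  have hzero : n * m = 0 := hinj (by simp only [zpow_mul, zpow_natCast, hpow, zpow_zero])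
  simp [hn, hm.ne'] at hzero

lemma SchurRing.zz_zpow_two_mul_mul_ss_notMem {F : Type} [Field F] [CharZero F]
    (A : SchurRing F Dinf) {k : ℤ} (hk : k ≠ 0)
    (hC : ({zz ^ k, zz ^ (-k)} : Finset Dinf) ∈ A.parts) {D : Finset Dinf} (hD : D ∈ A.parts)
    (hs : ss ∈ D) (hks : zz ^ k * ss ∈ D) : zz ^ (2 * k) * ss ∉ D := by
  intro h2ks
  rw [zpow_neg] at hC
  refine not_isOfFinOrder_zz_zpow hk (A.isOfFinOrder_of_mul_mem_of_inv_mul_mem hC hD hks ?_ ?_)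
  · rwa [← mul_assoc, ← zpow_add, ← two_mul]
  · rwa [inv_mul_cancel_left]

theorem stmt_11_general (F : Type) [Field F] [CharZero F] (A : SchurRing F Dinf)
    (i j : ℤ) (hi : i ≠ 0) (hj : j ≠ 0)
    (hCi : ({zz ^ i, zz ^ (-i)} : Finset Dinf) ∈ A.parts)
    (hCj : ({zz ^ j, zz ^ (-j)} : Finset Dinf) ∈ A.parts)
    (D : Finset Dinf) (hD : D ∈ A.parts)
    (hsD : ss ∈ D) (hiD : zz ^ i * ss ∈ D) (hjD : zz ^ j * ss ∈ D) :
    j ≠ 2 * i ∧ i ≠ 2 * j := by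
  constructor
  · rintro rfl
    exact A.zz_zpow_two_mul_mul_ss_notMem hi hCi hD hsD hiD hjD
  · rintro rfl
    exact A.zz_zpow_two_mul_mul_ss_notMem hj hCj hD hsD hjD hiD

/-- If `{z^i, z^(-i)}` and `{z^j, z^(-j)}` are basic sets, where `i`, `j` are distinct nonzero
integers, and some basic set `D` contains `s`, `z^i s` and `z^j s`, then `j ≠ 2i` and `i ≠ 2j`. -/
theorem stmt_11 (F : Type) [Field F] [CharZero F] (A : SchurRing F Dinf)
    (i j : ℤ) (hi : i ≠ 0) (hj : j ≠ 0) (hij : i ≠ j)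
    (hCi : ({zz ^ i, zz ^ (-i)} : Finset Dinf) ∈ A.parts)
    (hCj : ({zz ^ j, zz ^ (-j)} : Finset Dinf) ∈ A.parts)
    (D : Finset Dinf) (hD : D ∈ A.parts)
    (hsD : ss ∈ D) (hiD : zz ^ i * ss ∈ D) (hjD : zz ^ j * ss ∈ D) :
    j ≠ 2 * i ∧ i ≠ 2 * j :=
  stmt_11_general F A i j hi hj hCi hCj D hD hsD hiD hjD
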